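/- If Φ ≤ 0, Φ ≢ 0 and there exist N* ≥ 0 with E(N) < 0 for all N > N*, then E(ϑN) < ϑE(N) for all N > N* and ϑ > 1, where E(N) is the Hartree ground state energy with λ = 0. -/

import Mathlib

open MeasureTheory Complex

noncomputable section

abbrev E3 := EuclideanSpace ℝ (Fin 3)

/-- The Laplacian of a function `f : ℝ³ → ℂ`, as the trace of the second derivative. -/
noncomputable def lap (f : E3 → ℂ) (x : E3) : ℂ :=
  ∑ i : Fin 3, iteratedFDeriv ℝ 2 f x ![EuclideanSpace.single i 1, EuclideanSpace.single i 1]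

/-- The convolution `(Φ ∗ |ψ|²)(x)`. -/
noncomputable def convPot (Φ : E3 → ℝ) (ψ : E3 → ℂ) (x : E3) : ℝ :=
  ∫ y, Φ (x - y) * ‖ψ y‖ ^ 2

/-- Membership in the Sobolev space `H¹(ℝ³)`. -/
def H1 (ψ : E3 → ℂ) : Prop :=
  MemLp ψ 2 (volume : Measure E3) ∧ MemLp (fun x => fderiv ℝ ψ x) 2 (volume : Measure E3)

/-- The Hartree energy functional `H[ψ]`. -/
noncomputable def hartreeEnergy (lam nu : ℝ) (V Φ : E3 → ℝ) (ψ : E3 → ℂ) : ℝ :=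
  (1/2) * ∫ x, (‖fderiv ℝ ψ x‖ ^ 2 + lam * V x * ‖ψ x‖ ^ 2
      + (nu/2) * convPot Φ ψ x * ‖ψ x‖ ^ 2)

/-- The Hartree ground state energy `E(M)` (with `λ = 0`, `ν = 1`). -/
noncomputable def Egs (Φ : E3 → ℝ) (M : ℝ) : ℝ :=
  sInf {e | ∃ ψ : E3 → ℂ, H1 ψ ∧ (∫ x, ‖ψ x‖ ^ 2) = M ∧
    e = hartreeEnergy 0 1 (fun _ => 0) Φ ψ}

/-- The energy with `λ = 0` is a single factored integral. -/
lemma energy_eq (Φ : E3 → ℝ) (ψ : E3 → ℂ) :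
    hartreeEnergy 0 1 (fun _ => 0) Φ ψ
      = (1/2) * ∫ x, (‖fderiv ℝ ψ x‖ ^ 2 + (1/2) * convPot Φ ψ x * ‖ψ x‖ ^ 2) := by
  unfold hartreeEnergy
  norm_num

lemma memLp_sq_integrable {α : Type*} [MeasurableSpace α] {μ : Measure α}
    {F : Type*} [NormedAddCommGroup F] (f : α → F) (hf : MemLp f 2 μ) :
    Integrable (fun x => ‖f x‖ ^ 2) μ := by
  have := hf.integrable_norm_rpow (by norm_num) (by norm_num)
  simpa [Real.rpow_natCast] using this

/-- Key scaling construction: given `ψ` with negative energy, `√θ • ψ` has mass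
`θ` times that of `ψ` and energy at most `θ²` times that of `ψ`. -/
lemma key_scaling (Φ : E3 → ℝ) (θ : ℝ) (hθ : 1 < θ) (ψ : E3 → ℂ) (hψ : H1 ψ)
    (hE : hartreeEnergy 0 1 (fun _ => 0) Φ ψ < 0) :
    ∃ φ : E3 → ℂ, H1 φ ∧ (∫ x, ‖φ x‖ ^ 2) = θ * (∫ x, ‖ψ x‖ ^ 2) ∧
      hartreeEnergy 0 1 (fun _ => 0) Φ φ ≤ θ ^ 2 * hartreeEnergy 0 1 (fun _ => 0) Φ ψ := by
  have hθ0 : (0:ℝ) < θ := by linarith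
  set c : ℝ := Real.sqrt θ with hc
  have hc0 : 0 < c := Real.sqrt_pos.2 hθ0
  have hc2 : c ^ 2 = θ := Real.sq_sqrt hθ0.le
  set φ : E3 → ℂ := fun x => (c : ℂ) * ψ x with hφ
  -- pointwise norm squared
  have hnorm : ∀ x, ‖φ x‖ ^ 2 = θ * ‖ψ x‖ ^ 2 := by
    intro x
    have : ‖(c : ℂ)‖ = c := by
      simp [abs_of_pos hc0]
    rw [hφ]
    simp only [norm_mul, this, mul_pow, hc2]
  -- convolution scaling
  have hconv : ∀ x, convPot Φ φ x = θ * convPot Φ ψ x := by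
    intro x
    unfold convPot
    simp_rw [hnorm, mul_left_comm _ θ]
    exact integral_const_mul θ _
  -- derivative scaling
  have hfd : (fun x => fderiv ℝ φ x) = fun x => c • fderiv ℝ ψ x := by
    funext x
    by_cases h : DifferentiableAt ℝ ψ x
    · have hφs : φ = fun y => c • ψ y := by
        funext y; simp [hφ, Complex.real_smul]
      rw [hφs, fderiv_fun_const_smul h]
    · have h2 : ¬ DifferentiableAt ℝ φ x := by
        intro h2
        apply h
        have hcc : ((c : ℂ)) ≠ 0 := by exact_mod_cast hc0.ne'
        have hψs : ψ = fun y => c⁻¹ • φ y := by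
          funext y
          simp [hφ, Complex.real_smul, ← mul_assoc, inv_mul_cancel₀ hcc]
        rw [hψs]
        exact h2.fun_const_smul _
      rw [fderiv_zero_of_not_differentiableAt h, fderiv_zero_of_not_differentiableAt h2]
      exact (smul_zero (A := E3 →L[ℝ] ℂ) c).symm
  have hfdnorm : ∀ x, ‖fderiv ℝ φ x‖ ^ 2 = θ * ‖fderiv ℝ ψ x‖ ^ 2 := by
    intro x
    have hx : fderiv ℝ φ x = c • fderiv ℝ ψ x := congrFun hfd x
    have hcn : ‖c‖ = c := by simp [abs_of_pos hc0]
    have hns : ‖c • fderiv ℝ ψ x‖ = ‖c‖ * ‖fderiv ℝ ψ x‖ := norm_smul c (fderiv ℝ ψ x)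
    rw [hx, hns, hcn, mul_pow, hc2]
  -- H1 for φ
  have hφH1 : H1 φ := by
    constructor
    · exact hψ.1.const_mul _
    · rw [hfd]
      have h := hψ.2.const_smul c
      exact h
  -- mass
  have hmass : (∫ x, ‖φ x‖ ^ 2) = θ * (∫ x, ‖ψ x‖ ^ 2) := by
    simp_rw [hnorm]
    exact integral_const_mul θ _
  refine ⟨φ, hφH1, hmass, ?_⟩
  -- integrability of the pieces
  set A : E3 → ℝ := fun x => ‖fderiv ℝ ψ x‖ ^ 2 with hA
  set B : E3 → ℝ := fun x => (1/2) * convPot Φ ψ x * ‖ψ x‖ ^ 2 with hB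
  have hAint : Integrable A := memLp_sq_integrable _ hψ.2
  have hAnn : 0 ≤ ∫ x, A x := integral_nonneg fun x => by positivity
  have hEeq : hartreeEnergy 0 1 (fun _ => 0) Φ ψ = (1/2) * ∫ x, (A x + B x) :=
    energy_eq Φ ψ
  have hsum : Integrable (fun x => A x + B x) := by
    by_contra h
    rw [hEeq, integral_undef h] at hE
    norm_num at hE
  have hBint : Integrable B := by
    have h := hsum.sub hAint
    have hBeq : B = (fun x => A x + B x) - A := by
      funext x; simp only [Pi.sub_apply]; ring
    rw [hBeq]; exact h
  -- energy of φ
  have hEφ : hartreeEnergy 0 1 (fun _ => 0) Φ φ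
      = (1/2) * ∫ x, (θ * A x + θ ^ 2 * B x) := by
    rw [energy_eq]
    congr 1
    apply integral_congr_ae
    filter_upwards with x
    rw [hfdnorm x, hconv x, hnorm x, hA, hB]
    ring
  rw [hEφ, hEeq, integral_add ((hAint.const_mul θ)) (hBint.const_mul (θ^2)),
    integral_const_mul, integral_const_mul, integral_add hAint hBint]
  have hkey : θ * ∫ x, A x ≤ θ ^ 2 * ∫ x, A x :=
    mul_le_mul_of_nonneg_right (by nlinarith) hAnn
  linarith

/-- The strict scaling inequality E(θN) < θ E(N) for attractive Φ with E(N) < 0 above N*. -/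
theorem Egs_strict_scaling (Φ : E3 → ℝ) (hΦ : ∀ x, Φ x ≤ 0) (hΦne : ∃ x, Φ x ≠ 0)
    (Nstar : ℝ) (hNstar : 0 ≤ Nstar) (hneg : ∀ N : ℝ, Nstar < N → Egs Φ N < 0) :
    ∀ N : ℝ, Nstar < N → ∀ θ : ℝ, 1 < θ → Egs Φ (θ * N) < θ * Egs Φ N := by
  intro N hN θ hθ
  have hθ0 : (0:ℝ) < θ := by linarith
  have hN0 : 0 < N := lt_of_le_of_lt hNstar hN
  have hEN : Egs Φ N < 0 := hneg N hN
  have hEθN : Egs Φ (θ * N) < 0 := hneg _ (by nlinarith)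
  set S : Set ℝ := {e | ∃ ψ : E3 → ℂ, H1 ψ ∧ (∫ x, ‖ψ x‖ ^ 2) = N ∧
    e = hartreeEnergy 0 1 (fun _ => 0) Φ ψ} with hSdef
  set S' : Set ℝ := {e | ∃ ψ : E3 → ℂ, H1 ψ ∧ (∫ x, ‖ψ x‖ ^ 2) = θ * N ∧
    e = hartreeEnergy 0 1 (fun _ => 0) Φ ψ} with hS'def
  have hSval : Egs Φ N = sInf S := rfl
  have hS'val : Egs Φ (θ * N) = sInf S' := rfl
  have hSne : S.Nonempty := by
    by_contra h
    rw [Set.not_nonempty_iff_eq_empty] at h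
    rw [hSval, h, Real.sInf_empty] at hEN
    exact lt_irrefl _ hEN
  have hS'bdd : BddBelow S' := by
    by_contra h
    rw [hS'val, Real.sInf_of_not_bddBelow h] at hEθN
    exact lt_irrefl _ hEθN
  -- pick a near-minimizer below E(N)/θ
  have htarget : Egs Φ N < Egs Φ N / θ := by
    rw [lt_div_iff₀ hθ0]
    nlinarith
  obtain ⟨e, heS, helt⟩ : ∃ e ∈ S, e < Egs Φ N / θ :=
    exists_lt_of_csInf_lt hSne (by rw [← hSval]; exact htarget)
  obtain ⟨ψ, hψH1, hψmass, he⟩ := heS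
  have hEψneg : hartreeEnergy 0 1 (fun _ => 0) Φ ψ < 0 := by
    rw [← he]
    calc e < Egs Φ N / θ := helt
      _ < 0 := div_neg_of_neg_of_pos hEN hθ0
  obtain ⟨φ, hφH1, hφmass, hφE⟩ := key_scaling Φ θ hθ ψ hψH1 hEψneg
  have hmem : hartreeEnergy 0 1 (fun _ => 0) Φ φ ∈ S' := by
    exact ⟨φ, hφH1, by rw [hφmass, hψmass], rfl⟩
  have h1 : Egs Φ (θ * N) ≤ hartreeEnergy 0 1 (fun _ => 0) Φ φ := by
    rw [hS'val]; exact csInf_le hS'bdd hmem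
  have h2 : θ ^ 2 * hartreeEnergy 0 1 (fun _ => 0) Φ ψ < θ ^ 2 * (Egs Φ N / θ) := by
    apply mul_lt_mul_of_pos_left _ (by positivity)
    rw [← he]; exact helt
  have h3 : θ ^ 2 * (Egs Φ N / θ) = θ * Egs Φ N := by
    field_simp
  calc Egs Φ (θ * N) ≤ hartreeEnergy 0 1 (fun _ => 0) Φ φ := h1
    _ ≤ θ ^ 2 * hartreeEnergy 0 1 (fun _ => 0) Φ ψ := hφE
    _ < θ ^ 2 * (Egs Φ N / θ) := h2
    _ = θ * Egs Φ N := h3
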